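/- Let d ≥ 1 and let u be distributed on ℝ^d with the unit-scale truncated Cauchy density h, supported on the closed unit ball. Then E_u[‖u‖⁴] ≤ 1, and consequently the asymptotic mean-squared error of the TCSF scheme, AMSE_TCSF(γ₀,δ₀) = (c̄·δ₀²γ₀‖ΦT‖)² + (1/δ₀²)·trace(ΦP) with c̄ = E_u[‖u‖⁴], satisfies AMSE_TCSF(γ₀,δ₀) ≤ AMSE_GSF(γ₀,δ₀) and AMSE_TCSF(γ₀,δ₀) ≤ AMSE_SPSA(γ₀,δ₀), where AMSE_GSF is obtained by replacing c̄ with 3 and AMSE_SPSA by replacing c̄ with 1, for any vector T ∈ ℝ^d, positive semidefinite matrices Φ, P, and constants γ₀, δ₀ > 0. -/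

import Mathlib

open MeasureTheory Real Filter Topology ProbabilityTheory

/-- The truncated (to the `δ`-sphere) Cauchy density on `ℝ^d`, with normalizing
constant `c₁`: `h_δ(u) = Γ((d+1)/2)/(π^((d+1)/2) c₁ δ^d) · (1+‖u‖²/δ²)^(-(d+1)/2)`
for `‖u‖ ≤ δ` and `0` otherwise. -/
noncomputable def truncCauchy (d : ℕ) (c₁ δ : ℝ) (u : EuclideanSpace ℝ (Fin d)) : ℝ :=
  if ‖u‖ ≤ δ then
    Real.Gamma (((d : ℝ) + 1) / 2) / (Real.pi ^ (((d : ℝ) + 1) / 2) * c₁ * δ ^ d) *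
      (1 + ‖u‖ ^ 2 / δ ^ 2) ^ (-(((d : ℝ) + 1) / 2))
  else 0

/-- The unit-scale truncated Cauchy probability measure on `ℝ^d`. -/
noncomputable def truncCauchyMeasure (d : ℕ) (c₁ : ℝ) : Measure (EuclideanSpace ℝ (Fin d)) :=
  volume.withDensity fun v => ENNReal.ofReal (truncCauchy d c₁ 1 v)

/-! The density vanishes outside the closed unit ball, where `‖u‖⁴ ≤ 1`, so
`c̄ = ∫ h ‖u‖⁴ ≤ ∫ h = 1`. Since `c̄ ≥ 0` enters the AMSE only through `c̄²`, the AMSE is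
monotone in `c̄`, and `c̄ ≤ 1 ≤ 3` gives both comparisons. -/

section MomentBound

variable {E : Type*} [NormedAddCommGroup E] {f : E → ℝ}

lemma mul_norm_pow_le_of_eq_zero_of_one_lt_norm (hf0 : 0 ≤ f)
    (hsupp : ∀ u, 1 < ‖u‖ → f u = 0) (n : ℕ) (u : E) : f u * ‖u‖ ^ n ≤ f u := by
  rcases le_or_gt ‖u‖ 1 with hu | hu
  · exact mul_le_of_le_one_right (hf0 u) (pow_le_one₀ (norm_nonneg u) hu)
  · simp [hsupp u hu]

variable [MeasurableSpace E] [OpensMeasurableSpace E] {μ : Measure E}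

lemma integrable_mul_norm_pow_of_eq_zero_of_one_lt_norm (hf : Integrable f μ) (hf0 : 0 ≤ f)
    (hsupp : ∀ u, 1 < ‖u‖ → f u = 0) (n : ℕ) :
    Integrable (fun u => f u * ‖u‖ ^ n) μ := by
  refine hf.mono' (hf.aestronglyMeasurable.mul (by fun_prop)) (ae_of_all _ fun u => ?_)
  rw [Real.norm_of_nonneg (mul_nonneg (hf0 u) (by positivity))]
  exact mul_norm_pow_le_of_eq_zero_of_one_lt_norm hf0 hsupp n u

lemma integral_mul_norm_pow_le_integral (hf : Integrable f μ) (hf0 : 0 ≤ f)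
    (hsupp : ∀ u, 1 < ‖u‖ → f u = 0) (n : ℕ) :
    ∫ u, f u * ‖u‖ ^ n ∂μ ≤ ∫ u, f u ∂μ :=
  integral_mono (integrable_mul_norm_pow_of_eq_zero_of_one_lt_norm hf hf0 hsupp n) hf
    (mul_norm_pow_le_of_eq_zero_of_one_lt_norm hf0 hsupp n)

end MomentBound

lemma truncCauchy_nonneg {d : ℕ} {c₁ δ : ℝ} (hc₁ : 0 ≤ c₁) (hδ : 0 ≤ δ)
    (u : EuclideanSpace ℝ (Fin d)) : 0 ≤ truncCauchy d c₁ δ u := by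
  unfold truncCauchy
  split_ifs
  · have := Real.Gamma_nonneg_of_nonneg (s := ((d : ℝ) + 1) / 2) (by positivity)
    positivity
  · rfl

lemma truncCauchy_eq_zero_of_lt_norm {d : ℕ} {c₁ δ : ℝ} {u : EuclideanSpace ℝ (Fin d)}
    (hu : δ < ‖u‖) : truncCauchy d c₁ δ u = 0 :=
  if_neg hu.not_ge

lemma sq_mul_add_le_sq_mul_add {c c' : ℝ} (hc : 0 ≤ c) (hcc' : c ≤ c') (x b : ℝ) :
    (c * x) ^ 2 + b ≤ (c' * x) ^ 2 + b := by
  rw [mul_pow, mul_pow]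
  gcongr

theorem tcsf_amse_comparison_general
    (d : ℕ) (c₁ : ℝ) (hc₁ : 0 < c₁)
    (hnorm : ∫ u : EuclideanSpace ℝ (Fin d), truncCauchy d c₁ 1 u = 1)
    (cbar : ℝ)
    (hcbar : cbar = ∫ u : EuclideanSpace ℝ (Fin d), truncCauchy d c₁ 1 u * ‖u‖ ^ 4) :
    cbar ≤ 1 ∧
    ∀ (T : Fin d → ℝ) (Φ Pm : Matrix (Fin d) (Fin d) ℝ),
      Φ.PosSemidef → Pm.PosSemidef →
      ∀ γ₀ δ₀ : ℝ, 0 < γ₀ → 0 < δ₀ →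
        ((cbar * δ₀ ^ 2 * γ₀ * Real.sqrt (∑ i, (Φ.mulVec T i) ^ 2)) ^ 2
            + (1 / δ₀ ^ 2) * (Φ * Pm).trace
          ≤ (3 * δ₀ ^ 2 * γ₀ * Real.sqrt (∑ i, (Φ.mulVec T i) ^ 2)) ^ 2
            + (1 / δ₀ ^ 2) * (Φ * Pm).trace) ∧
        ((cbar * δ₀ ^ 2 * γ₀ * Real.sqrt (∑ i, (Φ.mulVec T i) ^ 2)) ^ 2
            + (1 / δ₀ ^ 2) * (Φ * Pm).trace
          ≤ (1 * δ₀ ^ 2 * γ₀ * Real.sqrt (∑ i, (Φ.mulVec T i) ^ 2)) ^ 2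
            + (1 / δ₀ ^ 2) * (Φ * Pm).trace) := by
  have hdens_nonneg : 0 ≤ truncCauchy d c₁ 1 := truncCauchy_nonneg hc₁.le zero_le_one
  have hcbar_le_one : cbar ≤ 1 := hcbar ▸ (integral_mul_norm_pow_le_integral
    (integrable_of_integral_eq_one hnorm) hdens_nonneg
    (fun _ => truncCauchy_eq_zero_of_lt_norm) 4).trans hnorm.le
  have hcbar_nonneg : 0 ≤ cbar :=
    hcbar ▸ integral_nonneg fun u => mul_nonneg (hdens_nonneg u) (by positivity)
  refine ⟨hcbar_le_one, fun T Φ Pm _ _ γ₀ δ₀ _ _ => ?_⟩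
  simp only [mul_assoc]
  exact ⟨sq_mul_add_le_sq_mul_add hcbar_nonneg (by linarith) _ _,
    sq_mul_add_le_sq_mul_add hcbar_nonneg hcbar_le_one _ _⟩

/-- AMSE comparison: for the unit-scale truncated Cauchy distribution `c̄ = E‖u‖⁴ ≤ 1`,
hence the asymptotic mean-squared error of TCSF,
`AMSE(c) = (c·δ₀²γ₀‖ΦT‖)² + (1/δ₀²)·trace(ΦP)`, is at most that of GSF (`c = 3`)
and of SPSA (`c = 1`). -/
theorem tcsf_amse_comparison
    (d : ℕ) (hd : 0 < d) (c₁ : ℝ) (hc₁ : 0 < c₁)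
    (hnorm : ∫ u : EuclideanSpace ℝ (Fin d), truncCauchy d c₁ 1 u = 1)
    (cbar : ℝ)
    (hcbar : cbar = ∫ u : EuclideanSpace ℝ (Fin d), truncCauchy d c₁ 1 u * ‖u‖ ^ 4) :
    cbar ≤ 1 ∧
    ∀ (T : Fin d → ℝ) (Φ Pm : Matrix (Fin d) (Fin d) ℝ),
      Φ.PosSemidef → Pm.PosSemidef →
      ∀ γ₀ δ₀ : ℝ, 0 < γ₀ → 0 < δ₀ →
        ((cbar * δ₀ ^ 2 * γ₀ * Real.sqrt (∑ i, (Φ.mulVec T i) ^ 2)) ^ 2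
            + (1 / δ₀ ^ 2) * (Φ * Pm).trace
          ≤ (3 * δ₀ ^ 2 * γ₀ * Real.sqrt (∑ i, (Φ.mulVec T i) ^ 2)) ^ 2
            + (1 / δ₀ ^ 2) * (Φ * Pm).trace) ∧
        ((cbar * δ₀ ^ 2 * γ₀ * Real.sqrt (∑ i, (Φ.mulVec T i) ^ 2)) ^ 2
            + (1 / δ₀ ^ 2) * (Φ * Pm).trace
          ≤ (1 * δ₀ ^ 2 * γ₀ * Real.sqrt (∑ i, (Φ.mulVec T i) ^ 2)) ^ 2
            + (1 / δ₀ ^ 2) * (Φ * Pm).trace) :=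
  tcsf_amse_comparison_general d c₁ hc₁ hnorm cbar hcbar
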